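/- (Lemma 2, part 4.) Nonzero density-evolution fixed points at distinct positive channel parameters are distinct: if 0 < ε₁ ≤ 1, 0 < ε₂ ≤ 1, ε₁ ≠ ε₂, x₁ ∈ X_{ε₁} \ {0} satisfies x₁ = f(g(x₁); ε₁), and x₂ ∈ X_{ε₂} \ {0} satisfies x₂ = f(g(x₂); ε₂), then x₁ ≠ x₂. -/

import Mathlib

open scoped BigOperators

noncomputable section

/-- Number of `j`-dimensional subspaces `U` of `𝔽₂^m` whose intersection with `W`
has dimension `k`. -/
def numInter (m j k : ℕ) (W : Submodule (ZMod 2) (Fin m → ZMod 2)) : ℕ :=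
  Set.ncard {U : Submodule (ZMod 2) (Fin m → ZMod 2) |
    Module.finrank (ZMod 2) U = j ∧ Module.finrank (ZMod 2) ↥(U ⊓ W) = k}

/-- Number of `j`-dimensional subspaces `U` of `𝔽₂^m` whose sum with `W`
has dimension `k`. -/
def numSum (m j k : ℕ) (W : Submodule (ZMod 2) (Fin m → ZMod 2)) : ℕ :=
  Set.ncard {U : Submodule (ZMod 2) (Fin m → ZMod 2) |
    Module.finrank (ZMod 2) U = j ∧ Module.finrank (ZMod 2) ↥(U ⊔ W) = k}

/-- Number of `j`-dimensional subspaces of `𝔽₂^m`. -/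
def numDim (m j : ℕ) : ℕ :=
  Set.ncard {U : Submodule (ZMod 2) (Fin m → ZMod 2) | Module.finrank (ZMod 2) U = j}

/-- A canonical `i`-dimensional subspace of `𝔽₂^m` (for `i ≤ m`): vectors supported on
the first `i` coordinates. -/
def stdW (m i : ℕ) : Submodule (ZMod 2) (Fin m → ZMod 2) :=
  Submodule.span (ZMod 2) {x | ∀ t : Fin m, i ≤ (t : ℕ) → x t = 0}

/-- `V^m_{i,j,k}`: probability that a uniformly random `j`-dimensional subspace `U`
of `𝔽₂^m` satisfies `dim (U ⊓ W) = k`, for a fixed `i`-dimensional subspace `W`. -/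
def Vprob (m i j k : ℕ) : ℝ := (numInter m j k (stdW m i) : ℝ) / (numDim m j : ℝ)

/-- `C^m_{i,j,k}`: probability that a uniformly random `j`-dimensional subspace `U`
of `𝔽₂^m` satisfies `dim (U ⊔ W) = k`, for a fixed `i`-dimensional subspace `W`. -/
def Cprob (m i j k : ℕ) : ℝ := (numSum m j k (stdW m i) : ℝ) / (numDim m j : ℝ)

/-- The operation `⊡`. -/
def boxdot (m : ℕ) (a b : Fin (m+1) → ℝ) : Fin (m+1) → ℝ :=
  fun k => ∑ i : Fin (m+1), ∑ j : Fin (m+1), Vprob m i j k * a i * b j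

/-- The operation `⊠`. -/
def boxtimes (m : ℕ) (a b : Fin (m+1) → ℝ) : Fin (m+1) → ℝ :=
  fun k => ∑ i : Fin (m+1), ∑ j : Fin (m+1), Cprob m i j k * a i * b j

/-- `boxdotPow m n a = ⊡^{n+1} a` (the `(n+1)`-fold `⊡`-product of `a` with itself). -/
def boxdotPow (m : ℕ) : ℕ → (Fin (m+1) → ℝ) → (Fin (m+1) → ℝ)
  | 0, a => a
  | n+1, a => boxdot m a (boxdotPow m n a)

/-- `boxtimesPow m n a = ⊠^{n+1} a` (the `(n+1)`-fold `⊠`-product of `a` with itself). -/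
def boxtimesPow (m : ℕ) : ℕ → (Fin (m+1) → ℝ) → (Fin (m+1) → ℝ)
  | 0, a => a
  | n+1, a => boxtimes m a (boxtimesPow m n a)

/-- `p∘(ε)`. -/
def pcirc (m : ℕ) (ε : ℝ) : Fin (m+1) → ℝ :=
  fun i => (m.choose i : ℝ) * ε ^ (i : ℕ) * (1 - ε) ^ (m - (i : ℕ))

/-- `f∘(y∘; ε) = p∘(ε) ⊡ (⊡^{d_v − 1} y∘)`. -/
def fcirc (m dv : ℕ) (ε : ℝ) (y : Fin (m+1) → ℝ) : Fin (m+1) → ℝ :=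
  boxdot m (pcirc m ε) (boxdotPow m (dv - 2) y)

/-- `g∘(x∘) = ⊠^{d_c − 1} x∘`. -/
def gcirc (m dc : ℕ) (x : Fin (m+1) → ℝ) : Fin (m+1) → ℝ :=
  boxtimesPow m (dc - 2) x

/-- Extension of `x ∈ ℝ^m` (indexed `1,…,m`) to `ℕ` with conventions `x_0 = 1`,
`x_i = 0` for `i > m`. -/
def extSeq (m : ℕ) (x : Fin m → ℝ) : ℕ → ℝ :=
  fun i => if _h0 : i = 0 then 1 else if h : i ≤ m then x ⟨i - 1, by omega⟩ else 0

/-- `x̃ ∈ ℝ^{m+1}` with `x̃_i = x_i − x_{i+1}`. -/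
def tilde (m : ℕ) (x : Fin m → ℝ) : Fin (m+1) → ℝ :=
  fun i => extSeq m x i - extSeq m x ((i : ℕ) + 1)

/-- `f(y; ε)_i = Σ_{k=i}^m f∘(ỹ; ε)_k` (here `i : Fin m` denotes the index `i+1 ∈ {1,…,m}`). -/
def fFun (m dv : ℕ) (ε : ℝ) (y : Fin m → ℝ) : Fin m → ℝ :=
  fun i => ∑ k : Fin (m+1), if (i : ℕ) + 1 ≤ (k : ℕ) then fcirc m dv ε (tilde m y) k else 0

/-- `g(x)_i = Σ_{k=i}^m g∘(x̃)_k`. -/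
def gFun (m dc : ℕ) (x : Fin m → ℝ) : Fin m → ℝ :=
  fun i => ∑ k : Fin (m+1), if (i : ℕ) + 1 ≤ (k : ℕ) then gcirc m dc (tilde m x) k else 0

/-- `p(ε)_i = Σ_{k=i}^m p∘_k(ε)`. -/
def pFun (m : ℕ) (ε : ℝ) : Fin m → ℝ :=
  fun i => ∑ k : Fin (m+1), if (i : ℕ) + 1 ≤ (k : ℕ) then pcirc m ε k else 0

/-- `X_ε = {x ∈ ℝ^m : 0 ≤ x_i ≤ p(ε)_i}`. -/
def Xset (m : ℕ) (ε : ℝ) : Set (Fin m → ℝ) := {x | ∀ i, 0 ≤ x i ∧ x i ≤ pFun m ε i}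

/-- `Y = [0,1]^m`. -/
def Yset (m : ℕ) : Set (Fin m → ℝ) := {y | ∀ i, 0 ≤ y i ∧ y i ≤ 1}

/-- The continuous linear map `v ↦ Σ_s c_s v_s`, i.e. the row vector `c` viewed as a
linear functional; used to express gradients. -/
def rowDeriv (m : ℕ) (c : Fin m → ℝ) : (Fin m → ℝ) →L[ℝ] ℝ :=
  ∑ s : Fin m, c s • (ContinuousLinearMap.proj s : (Fin m → ℝ) →L[ℝ] ℝ)

/-- The potential function `U(x; ε) = g(x) D xᵀ − G(x) − F(g(x); ε)` (with `ε` fixed,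
absorbed into `F`). -/
def Upot (m dc : ℕ) (D : Matrix (Fin m) (Fin m) ℝ) (F G : (Fin m → ℝ) → ℝ)
    (x : Fin m → ℝ) : ℝ :=
  (∑ a : Fin m, ∑ b : Fin m, gFun m dc x a * D a b * x b) - G x - F (gFun m dc x)

/-!
Weigh a dimension profile `a ∈ ℝ^{m+1}` by `Φ(a) = ∑ₖ aₖ (2^k − 1)`, the expected number of
nonzero vectors of a random subspace with that dimension law. Double counting the pairs `(U, v)`
with `0 ≠ v ∈ U ∩ W` gives `Φ(a ⊡ b) = Φ(a) Φ(b) / (2^m − 1)`, and the binomial theorem gives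
`Φ(p∘(ε)) = (1 + ε)^m − 1`. Summing by parts, a fixed point `x = f(g(x); ε)` satisfies
`∑ᵢ xᵢ 2^{i-1} = ((1 + ε)^m − 1) · c` with `c` determined by `g(x)` alone. A common fixed point
for `ε₁ ≠ ε₂` therefore forces `c = 0`, so the nonnegative vector `x` vanishes.
-/

open Finset Module

lemma exists_linearEquiv_apply_eq {K V : Type*} [Field K] [AddCommGroup V] [Module K V]
    {v w : V} (hv : v ≠ 0) (hw : w ≠ 0) : ∃ e : V ≃ₗ[K] V, e v = w := by
  obtain ⟨e, he⟩ := Submodule.exists_linearEquiv_restrict_eq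
    ((LinearEquiv.coord K V v hv).trans (LinearEquiv.toSpanNonzeroSingleton K V w hw))
  refine ⟨e, ?_⟩
  simpa [LinearEquiv.coord_self] using (he ⟨v, Submodule.mem_span_singleton_self v⟩).symm

section SubspaceCounting

open scoped Classical

variable {K V : Type*} [Field K] [AddCommGroup V] [Module K V] [Fintype V]

lemma card_finrank_eq_mem_eq (j : ℕ) {v w : V} (hv : v ≠ 0) (hw : w ≠ 0) :
    #{U : Submodule K V | finrank K U = j ∧ v ∈ U} =
      #{U : Submodule K V | finrank K U = j ∧ w ∈ U} := by
  obtain ⟨e, rfl⟩ := exists_linearEquiv_apply_eq (K := K) hv hw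
  refine card_equiv (Submodule.orderIsoMapComap e).toEquiv fun U => ?_
  simp [LinearEquiv.finrank_map_eq, Submodule.mem_map_equiv]

variable [Fintype K]

local notation "q" => Fintype.card K

lemma card_filter_mem_ne_zero (U : Submodule K V) :
    #{v | v ∈ U ∧ v ≠ 0} = q ^ finrank K U - 1 := by
  rw [← card_eq_pow_finrank, Fintype.card_subtype, ← filter_filter, filter_ne',
    card_erase_of_mem (by simp)]

lemma sum_pow_finrank_inf_sub_one (S : Finset (Submodule K V)) (W : Submodule K V) :
    ∑ U ∈ S, (q ^ finrank K ↥(U ⊓ W) - 1) = ∑ v with v ∈ W ∧ v ≠ 0, #{U ∈ S | v ∈ U} := by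
  refine Eq.trans ?_ (sum_card_bipartiteAbove_eq_sum_card_bipartiteBelow (fun U v => v ∈ U))
  refine sum_congr rfl fun U _ => ?_
  rw [← card_filter_mem_ne_zero, bipartiteAbove, filter_filter]
  congr 1
  ext v
  simp only [mem_filter, mem_univ, true_and, Submodule.mem_inf]
  tauto

/-- Double counting of pairs `(U, v)` with `0 ≠ v ∈ U ⊓ W`; the number of `j`-dimensional
subspaces through a nonzero vector does not depend on the vector, and is found from `W = ⊤`. -/
theorem pow_finrank_sub_one_mul_sum_pow_finrank_inf [Nontrivial V] (j : ℕ) (W : Submodule K V) :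
    (q ^ finrank K V - 1) * ∑ U ∈ {U : Submodule K V | finrank K U = j},
        (q ^ finrank K ↥(U ⊓ W) - 1)
      = #{U : Submodule K V | finrank K U = j} * ((q ^ finrank K W - 1) * (q ^ j - 1)) := by
  obtain ⟨v₀, hv₀⟩ := exists_ne (0 : V)
  set N := #{U : Submodule K V | finrank K U = j ∧ v₀ ∈ U}
  have hsum (W' : Submodule K V) :
      ∑ U ∈ {U : Submodule K V | finrank K U = j}, (q ^ finrank K ↥(U ⊓ W') - 1)
        = (q ^ finrank K W' - 1) * N := by
    rw [sum_pow_finrank_inf_sub_one, ← card_filter_mem_ne_zero, ← smul_eq_mul, ← sum_const]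
    refine sum_congr rfl fun v hv => ?_
    rw [filter_filter]
    exact card_finrank_eq_mem_eq j (mem_filter.mp hv).2.2 hv₀
  have htop := hsum ⊤
  rw [finrank_top, sum_congr rfl fun U hU => by rw [inf_top_eq, (mem_filter.mp hU).2],
    sum_const, smul_eq_mul] at htop
  rw [hsum W, mul_left_comm, ← htop]
  ring

end SubspaceCounting

section BinarySubspaces

variable {m : ℕ}

lemma finrank_stdW {i : ℕ} (hi : i ≤ m) : finrank (ZMod 2) (stdW m i) = i := by
  let restrict := LinearMap.funLeft (ZMod 2) (ZMod 2) (Subtype.val : {t : Fin m // i ≤ t} → Fin m)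
  have hker : stdW m i = LinearMap.ker restrict := by
    rw [stdW, ← Submodule.span_eq (LinearMap.ker restrict)]
    congr 1
    ext x
    simp [restrict, funext_iff]
  have hcard : Fintype.card {t : Fin m // i ≤ t} = m - i := by
    simp_rw [← not_lt]
    rw [Fintype.card_subtype_compl, Fintype.card_fin, Fintype.card_subtype, Fin.card_filter_val_lt]
    omega
  have h := LinearMap.finrank_range_add_finrank_ker restrict
  rw [LinearMap.range_eq_top.mpr
      (LinearMap.funLeft_surjective_of_injective _ _ _ Subtype.val_injective),
    finrank_top, finrank_fintype_fun_eq_card, hcard, finrank_fin_fun, ← hker] at h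
  omega

lemma numDim_eq_card (j : ℕ) :
    numDim m j = #{U : Submodule (ZMod 2) (Fin m → ZMod 2) | finrank (ZMod 2) U = j} := by
  rw [numDim, Set.ncard_eq_toFinset_card', Set.toFinset_ofPred]

lemma numDim_ne_zero {j : ℕ} (hj : j ≤ m) : numDim m j ≠ 0 := by
  rw [numDim_eq_card, Nat.ne_zero_iff_zero_lt, card_pos]
  exact ⟨stdW m j, by simpa using finrank_stdW hj⟩

lemma sum_numInter_mul_two_pow_sub_one (j : ℕ) (W : Submodule (ZMod 2) (Fin m → ZMod 2)) :
    ∑ k : Fin (m + 1), numInter m j k W * (2 ^ (k : ℕ) - 1)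
      = ∑ U ∈ {U : Submodule (ZMod 2) (Fin m → ZMod 2) | finrank (ZMod 2) U = j},
          (2 ^ finrank (ZMod 2) ↥(U ⊓ W) - 1) := by
  have hmaps : ∀ U ∈ ({U : Submodule (ZMod 2) (Fin m → ZMod 2) | finrank (ZMod 2) U = j} :
      Finset _), finrank (ZMod 2) ↥(U ⊓ W) ∈ range (m + 1) := fun U _ =>
    mem_range.mpr (Nat.lt_succ_of_le ((Submodule.finrank_le _).trans_eq (finrank_fin_fun _)))
  rw [Fin.sum_univ_eq_sum_range (fun k => numInter m j k W * (2 ^ k - 1)),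
    ← sum_fiberwise_of_maps_to' hmaps (fun k => 2 ^ k - 1)]
  refine sum_congr rfl fun k _ => ?_
  rw [sum_const, smul_eq_mul, numInter, Set.ncard_eq_toFinset_card', Set.toFinset_ofPred,
    filter_filter]

lemma sum_Vprob_mul_two_pow_sub_one (hm : 1 ≤ m) (i j : Fin (m + 1)) :
    ∑ k : Fin (m + 1), Vprob m i j k * ((2 : ℝ) ^ (k : ℕ) - 1)
      = ((2 : ℝ) ^ (i : ℕ) - 1) * ((2 : ℝ) ^ (j : ℕ) - 1) / ((2 : ℝ) ^ m - 1) := by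
  have : NeZero m := ⟨by omega⟩
  have hcount := pow_finrank_sub_one_mul_sum_pow_finrank_inf (K := ZMod 2) (j : ℕ) (stdW m i)
  rw [ZMod.card, finrank_fin_fun, finrank_stdW (Fin.is_le i),
    ← sum_numInter_mul_two_pow_sub_one, ← numDim_eq_card] at hcount
  have hcast := congrArg (Nat.cast : ℕ → ℝ) hcount
  push_cast [Nat.one_le_two_pow] at hcast
  have hdim : (numDim m j : ℝ) ≠ 0 := Nat.cast_ne_zero.mpr (numDim_ne_zero (Fin.is_le j))
  have hpow : (2 : ℝ) ^ m - 1 ≠ 0 := sub_ne_zero.mpr (one_lt_pow₀ one_lt_two (by omega)).ne'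
  simp only [Vprob, div_mul_eq_mul_div, ← sum_div]
  rw [div_eq_div_iff hdim hpow]
  linarith

end BinarySubspaces

section Moment

variable {m : ℕ}

/-- The expected number of nonzero vectors in a random subspace of `𝔽₂^m` whose dimension
has law `a`. -/
def moment (m : ℕ) (a : Fin (m + 1) → ℝ) : ℝ :=
  ∑ k : Fin (m + 1), a k * ((2 : ℝ) ^ (k : ℕ) - 1)

lemma moment_boxdot (hm : 1 ≤ m) (a b : Fin (m + 1) → ℝ) :
    moment m (boxdot m a b) = moment m a * moment m b / ((2 : ℝ) ^ m - 1) := by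
  calc moment m (boxdot m a b)
      = ∑ i, ∑ j, a i * b j * ∑ k : Fin (m + 1), Vprob m i j k * ((2 : ℝ) ^ (k : ℕ) - 1) := by
        simp only [moment, boxdot, sum_mul, mul_sum]
        rw [sum_comm]
        refine sum_congr rfl fun i _ => ?_
        rw [sum_comm]
        exact sum_congr rfl fun j _ => sum_congr rfl fun k _ => by ring
    _ = moment m a * moment m b / ((2 : ℝ) ^ m - 1) := by
        simp only [sum_Vprob_mul_two_pow_sub_one hm, moment, sum_mul_sum, sum_div]
        exact sum_congr rfl fun i _ => sum_congr rfl fun j _ => by ring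

lemma moment_pcirc (ε : ℝ) : moment m (pcirc m ε) = (1 + ε) ^ m - 1 := by
  have hsplit (k : Fin (m + 1)) : pcirc m ε k * ((2 : ℝ) ^ (k : ℕ) - 1)
      = (2 * ε) ^ (k : ℕ) * (1 - ε) ^ (m - k) * m.choose k
        - ε ^ (k : ℕ) * (1 - ε) ^ (m - k) * m.choose k := by
    rw [pcirc, mul_pow]
    ring
  rw [moment, sum_congr rfl fun k _ => hsplit k, sum_sub_distrib,
    Fin.sum_univ_eq_sum_range (fun k => (2 * ε) ^ k * (1 - ε) ^ (m - k) * m.choose k),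
    Fin.sum_univ_eq_sum_range (fun k => ε ^ k * (1 - ε) ^ (m - k) * m.choose k),
    ← add_pow, ← add_pow]
  ring_nf

lemma sum_ite_succ_le_two_pow (k : Fin (m + 1)) :
    ∑ i : Fin m, (if (i : ℕ) + 1 ≤ k then (2 : ℝ) ^ (i : ℕ) else 0) = 2 ^ (k : ℕ) - 1 := by
  rw [Fin.sum_univ_eq_sum_range (fun i => if i + 1 ≤ (k : ℕ) then (2 : ℝ) ^ i else 0),
    ← sum_filter]
  have hfilter : {i ∈ range m | i + 1 ≤ (k : ℕ)} = range k := by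
    ext i
    simp only [mem_filter, mem_range]
    omega
  rw [hfilter, geom_sum_eq (by norm_num : (2 : ℝ) ≠ 1)]
  norm_num

lemma sum_tail_mul_two_pow (a : Fin (m + 1) → ℝ) :
    ∑ i : Fin m, (∑ k : Fin (m + 1), if (i : ℕ) + 1 ≤ k then a k else 0) * (2 : ℝ) ^ (i : ℕ)
      = moment m a := by
  simp only [sum_mul, ite_mul, zero_mul]
  rw [sum_comm]
  refine sum_congr rfl fun k _ => ?_
  simp only [← sum_ite_succ_le_two_pow k, mul_sum, mul_ite, mul_zero]

lemma sum_fFun_mul_two_pow (hm : 1 ≤ m) (dv : ℕ) (ε : ℝ) (y : Fin m → ℝ) :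
    ∑ i, fFun m dv ε y i * (2 : ℝ) ^ (i : ℕ)
      = ((1 + ε) ^ m - 1) * (moment m (boxdotPow m (dv - 2) (tilde m y)) / (2 ^ m - 1)) := by
  rw [← moment_pcirc, mul_div_assoc', ← moment_boxdot hm]
  exact sum_tail_mul_two_pow (fcirc m dv ε (tilde m y))

end Moment

theorem fixed_points_distinct_general (m dv dc : ℕ) (hm : 1 ≤ m)
    (ε₁ ε₂ : ℝ) (h10 : 0 < ε₁) (h20 : 0 < ε₂) (hne : ε₁ ≠ ε₂)
    (x₁ x₂ : Fin m → ℝ)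
    (hx₁ : x₁ ∈ Xset m ε₁) (hx₁0 : x₁ ≠ 0) (hfp₁ : x₁ = fFun m dv ε₁ (gFun m dc x₁))
    (hfp₂ : x₂ = fFun m dv ε₂ (gFun m dc x₂)) :
    x₁ ≠ x₂ := by
  rintro rfl
  have h₁ := sum_fFun_mul_two_pow hm dv ε₁ (gFun m dc x₁)
  have h₂ := sum_fFun_mul_two_pow hm dv ε₂ (gFun m dc x₁)
  rw [← hfp₁] at h₁
  rw [← hfp₂] at h₂
  have hpow : (1 + ε₁) ^ m - 1 ≠ (1 + ε₂) ^ m - 1 := by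
    rw [Ne, sub_left_inj, pow_left_inj₀ (by linarith) (by linarith) (by omega)]
    exact fun h => hne (by linarith)
  rw [(mul_eq_mul_right_iff.mp (h₁.symm.trans h₂)).resolve_left hpow, mul_zero] at h₁
  have hterms := (Fintype.sum_eq_zero_iff_of_nonneg fun i => mul_nonneg (hx₁ i).1
    (by positivity)).mp h₁
  exact hx₁0 (funext fun i => (mul_eq_zero.mp (congrFun hterms i)).resolve_right (by positivity))

/-- **Lemma 2, part 4.** Nonzero density-evolution fixed points at distinct
positive channel parameters are distinct. -/
theorem fixed_points_distinct (m dv dc : ℕ) (hm : 1 ≤ m) (hdv : 2 ≤ dv) (hdc : 2 ≤ dc)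
    (ε₁ ε₂ : ℝ) (h10 : 0 < ε₁) (h11 : ε₁ ≤ 1) (h20 : 0 < ε₂) (h21 : ε₂ ≤ 1) (hne : ε₁ ≠ ε₂)
    (x₁ x₂ : Fin m → ℝ)
    (hx₁ : x₁ ∈ Xset m ε₁) (hx₁0 : x₁ ≠ 0) (hfp₁ : x₁ = fFun m dv ε₁ (gFun m dc x₁))
    (hx₂ : x₂ ∈ Xset m ε₂) (hx₂0 : x₂ ≠ 0) (hfp₂ : x₂ = fFun m dv ε₂ (gFun m dc x₂)) :
    x₁ ≠ x₂ :=
  fixed_points_distinct_general m dv dc hm ε₁ ε₂ h10 h20 hne x₁ x₂ hx₁ hx₁0 hfp₁ hfp₂
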